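/- Let τ and y₀ satisfy the leading-order escape-boundary equations y₀ = 1 + 2ετ x₀ - 3ε x₀ log(1+τ) and 2 = 6τε x₀ - (1+4τ)ε x₀ log((1+4τ)/(1+τ)), where ε x₀ → ∞ and τ → 0 with ε x₀ τ bounded. Then to leading order τ = 2/(3ε x₀) and y₀ = 1/3; i.e. substituting τ = 2/(3εx₀)(1 + o(1)) into the first equation and expanding log(1+τ) = τ - τ²/2 + O(τ³) gives y₀ → 1/3 as εx₀ → ∞. -/

import Mathlib

/-!
Since `τ → 0` with `τ ≠ 0`, the quotients `log (1 + τ) / τ` and `log ((1 + 4τ)/(1 + τ)) / τ` are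
difference quotients at `0` and tend to the derivatives `1` and `3`. Dividing the second equation
by `τ` gives `sτ · (6 - (1 + 4τ) · 3 + o(1)) = 2`, so `sτ → 2/3`; the first equation reads
`y₀ = 1 + sτ (2 - 3 log (1 + τ) / τ) → 1 + (2/3)(2 - 3) = 1/3`.
-/

open Filter Topology

lemma tendsto_div_self_nhdsNE_of_hasDerivAt {g : ℝ → ℝ} {c : ℝ} (hg : HasDerivAt g c 0)
    (hg0 : g 0 = 0) : Tendsto (fun t => g t / t) (𝓝[≠] 0) (𝓝 c) := by
  simpa [hg0, div_eq_inv_mul] using hg.tendsto_slope_zero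

lemma hasDerivAt_log_one_add_mul (c : ℝ) :
    HasDerivAt (fun t => Real.log (1 + c * t)) c 0 := by
  have h : HasDerivAt (fun t : ℝ => 1 + c * t) c 0 := by
    simpa using ((hasDerivAt_id (0 : ℝ)).const_mul c).const_add 1
  simpa using h.log (by norm_num)

lemma hasDerivAt_log_one_add_four_mul_div_one_add :
    HasDerivAt (fun t => Real.log ((1 + 4 * t) / (1 + t))) 3 0 := by
  have hnum : HasDerivAt (fun t : ℝ => 1 + 4 * t) 4 0 := by
    simpa using ((hasDerivAt_id (0 : ℝ)).const_mul 4).const_add 1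
  have hden : HasDerivAt (fun t : ℝ => 1 + t) 1 0 := by
    simpa using (hasDerivAt_id (0 : ℝ)).const_add 1
  have h := (hnum.div hden (by norm_num)).log (by norm_num)
  norm_num at h
  exact h

lemma tendsto_six_sub_mul_log_div :
    Tendsto (fun t => 6 - (1 + 4 * t) * (Real.log ((1 + 4 * t) / (1 + t)) / t))
      (𝓝[≠] 0) (𝓝 3) := by
  have hlin : Tendsto (fun t : ℝ => 1 + 4 * t) (𝓝[≠] 0) (𝓝 1) := by
    have : Continuous (fun t : ℝ => 1 + 4 * t) := by fun_prop
    simpa using (this.tendsto 0).mono_left nhdsWithin_le_nhds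
  have hlog := tendsto_div_self_nhdsNE_of_hasDerivAt
    hasDerivAt_log_one_add_four_mul_div_one_add (by norm_num)
  convert (tendsto_const_nhds (x := (6 : ℝ))).sub (hlin.mul hlog) using 2
  norm_num

theorem stmt16_general (τ y₀ : ℝ → ℝ)
    (hτpos : ∀ s, 0 < s → 0 < τ s)
    (hτ0 : Tendsto τ atTop (nhds 0))
    (heq1 : ∀ s, 0 < s → y₀ s = 1 + 2 * s * τ s - 3 * s * Real.log (1 + τ s))
    (heq2 : ∀ s, 0 < s →
      2 = 6 * τ s * s
        - (1 + 4 * τ s) * s * Real.log ((1 + 4 * τ s) / (1 + τ s))) :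
    Tendsto (fun s => s * τ s) atTop (nhds (2 / 3)) ∧
    Tendsto y₀ atTop (nhds (1 / 3)) := by
  have hpos : ∀ᶠ s : ℝ in atTop, 0 < s := eventually_gt_atTop 0
  have hτ : Tendsto τ atTop (𝓝[≠] 0) :=
    tendsto_nhdsWithin_iff.mpr ⟨hτ0, hpos.mono fun s hs => (hτpos s hs).ne'⟩
  set D := fun s => 6 - (1 + 4 * τ s) * (Real.log ((1 + 4 * τ s) / (1 + τ s)) / τ s)
  have hD : Tendsto D atTop (𝓝 3) := tendsto_six_sub_mul_log_div.comp hτ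
  have hsτ : ∀ᶠ s in atTop, s * τ s = 2 / D s := by
    filter_upwards [hpos, hD.eventually_ne three_ne_zero] with s hs hDs
    have hτs := (hτpos s hs).ne'
    rw [eq_div_iff hDs, heq2 s hs]
    simp only [D]
    field_simp
  have hlim : Tendsto (fun s => s * τ s) atTop (𝓝 (2 / 3)) :=
    (tendsto_const_nhds.div hD three_ne_zero).congr' (hsτ.mono fun _ h => h.symm)
  have hlog : Tendsto (fun s => Real.log (1 + τ s) / τ s) atTop (𝓝 1) := by
    simpa [Function.comp_def] using ((tendsto_div_self_nhdsNE_of_hasDerivAt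
      (hasDerivAt_log_one_add_mul 1) (by simp)).comp hτ)
  have hy : ∀ᶠ s in atTop, 1 + s * τ s * (2 - 3 * (Real.log (1 + τ s) / τ s)) = y₀ s := by
    filter_upwards [hpos] with s hs
    have hτs := (hτpos s hs).ne'
    rw [heq1 s hs]
    field_simp
    ring
  refine ⟨hlim, Tendsto.congr' hy ?_⟩
  convert tendsto_const_nhds.add (hlim.mul (tendsto_const_nhds.sub (hlog.const_mul 3)))
    using 2
  norm_num

/-- Asymptotic solution of the escape-boundary matching equations: if, in terms of the
large parameter `s = εx₀`, the quantities `τ(s) > 0` and `y₀(s)` satisfy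
`y₀ = 1 + 2sτ - 3s log(1+τ)` and `2 = 6τs - (1+4τ)s log((1+4τ)/(1+τ))`, with `τ → 0`
and `sτ` bounded, then to leading order `τ = 2/(3s)` and `y₀ → 1/3`. -/
theorem stmt16 (τ y₀ : ℝ → ℝ)
    (hτpos : ∀ s, 0 < s → 0 < τ s)
    (hτ0 : Tendsto τ atTop (nhds 0))
    (hbd : ∃ C : ℝ, ∀ s, 0 < s → s * τ s ≤ C)
    (heq1 : ∀ s, 0 < s → y₀ s = 1 + 2 * s * τ s - 3 * s * Real.log (1 + τ s))
    (heq2 : ∀ s, 0 < s →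
      2 = 6 * τ s * s
        - (1 + 4 * τ s) * s * Real.log ((1 + 4 * τ s) / (1 + τ s))) :
    Tendsto (fun s => s * τ s) atTop (nhds (2 / 3)) ∧
    Tendsto y₀ atTop (nhds (1 / 3)) :=
  stmt16_general τ y₀ hτpos hτ0 heq1 heq2
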